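/- Let B = x_{i₁}⋯x_{iₙ} be a positive word in the generators of Thompson's group F (presented by ⟨x₀, x₁, … | xₙxₖ = xₖx_{n+1} for k < n⟩). Say that a letter x_i skips over B if x_i B = B x_{i+n} in F. Then x_i skips over B if and only if i_j < i + j - 1 for all j = 1, …, n; and if x_i skips over B then so does x_k for every k > i. -/
import Mathlib

/-- The defining relators of Thompson's group `F`:
`xₖ⁻¹ xₙ xₖ x_{n+1}⁻¹` for all `k < n`. -/
def thompsonRels : Set (FreeGroup ℕ) :=
  {r | ∃ k n : ℕ, k < n ∧
    r = (FreeGroup.of k)⁻¹ * FreeGroup.of n * FreeGroup.of k * (FreeGroup.of (n + 1))⁻¹}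

/-- Thompson's group `F`, presented by `⟨x₀, x₁, … | xₙ xₖ = xₖ x_{n+1} (k < n)⟩`. -/
abbrev ThompsonF : Type := PresentedGroup thompsonRels

/-- The generator `xᵢ` of Thompson's group `F`. -/
def x (i : ℕ) : ThompsonF := PresentedGroup.of i

noncomputable section SkipsAux

/-- The piecewise-linear map realizing `xₖ`. -/
def ff (k : ℕ) (t : ℝ) : ℝ :=
  if t ≤ k then t else if t ≤ k + 2 then (t + k) / 2 else t - 1

/-- Inverse of `ff k`. -/
def gg (k : ℕ) (s : ℝ) : ℝ :=
  if s ≤ k then s else if s ≤ k + 1 then 2 * s - k else s + 1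

/-- `ff k` as a permutation of `ℝ`. -/
def ee (k : ℕ) : Equiv.Perm ℝ where
  toFun := ff k
  invFun := gg k
  left_inv := by
    intro t
    unfold ff gg
    split_ifs <;> linarith
  right_inv := by
    intro s
    unfold ff gg
    split_ifs <;> linarith

lemma ee_apply (k : ℕ) (t : ℝ) : ee k t = ff k t := rfl

set_option maxHeartbeats 2000000 in
lemma ee_rel {k n : ℕ} (h : k < n) : ee n * ee k = ee k * ee (n + 1) := by
  have h' : (k : ℝ) + 1 ≤ n := by exact_mod_cast h
  ext t
  simp only [Equiv.Perm.mul_apply, ee, Equiv.coe_fn_mk]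
  unfold ff
  push_cast
  split_ifs <;> linarith

lemma rels_killed : ∀ r ∈ thompsonRels, FreeGroup.lift ee r = 1 := by
  rintro r ⟨k, n, hkn, rfl⟩
  simp only [map_mul, map_inv, FreeGroup.lift_apply_of]
  rw [mul_assoc, mul_assoc, ← mul_assoc (ee n), ee_rel hkn]
  group

/-- The representation of Thompson's group on `ℝ`. -/
def pi : ThompsonF →* Equiv.Perm ℝ := PresentedGroup.toGroup rels_killed

lemma pi_x (i : ℕ) : pi (x i) = ee i := PresentedGroup.toGroup.of rels_killed

lemma pi_prod (L : List ℕ) : pi (L.map x).prod = (L.map ee).prod := by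
  rw [map_list_prod]
  congr 1
  simp [Function.comp, pi_x, List.map_map]

/- pointwise estimates -/
lemma ff_le (k : ℕ) (t : ℝ) : ff k t ≤ t := by
  unfold ff; split_ifs <;> linarith

lemma ff_ge (k : ℕ) (t : ℝ) : t - 1 ≤ ff k t := by
  unfold ff; split_ifs <;> linarith

lemma ff_eq {k : ℕ} {t : ℝ} (h : t ≤ k) : ff k t = t := by
  unfold ff; split_ifs <;> linarith

lemma ff_lt {k : ℕ} {t : ℝ} (h : (k : ℝ) < t) : ff k t < t := by
  unfold ff; split_ifs <;> linarith

lemma ff_gt {k : ℕ} {t : ℝ} (h : t < (k : ℝ) + 2) : t - 1 < ff k t := by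
  unfold ff; split_ifs <;> linarith

lemma prod_bounds (L : List ℕ) (t : ℝ) :
    t - L.length ≤ (L.map ee).prod t ∧ (L.map ee).prod t ≤ t := by
  induction L generalizing t with
  | nil => simp
  | cons a L ih =>
    simp only [List.map_cons, List.prod_cons, Equiv.Perm.mul_apply, List.length_cons]
    obtain ⟨h1, h2⟩ := ih t
    push_cast
    have h3 := ff_ge a ((L.map ee).prod t)
    have h4 := ff_le a ((L.map ee).prod t)
    constructor <;> [skip; skip] <;> simp only [ee_apply] <;> linarith

/-- The relation in the group. -/
lemma x_rel {k n : ℕ} (h : k < n) : x n * x k = x k * x (n + 1) := by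
  have hmem : (FreeGroup.of k)⁻¹ * FreeGroup.of n * FreeGroup.of k * (FreeGroup.of (n + 1))⁻¹
      ∈ Subgroup.normalClosure thompsonRels :=
    Subgroup.subset_normalClosure ⟨k, n, h, rfl⟩
  have h1 : PresentedGroup.mk thompsonRels
      ((FreeGroup.of k)⁻¹ * FreeGroup.of n * FreeGroup.of k * (FreeGroup.of (n + 1))⁻¹) = 1 :=
    (QuotientGroup.eq_one_iff _).mpr hmem
  simp only [map_mul, map_inv] at h1
  have h2 : (x k)⁻¹ * x n * x k * (x (n+1))⁻¹ = 1 := h1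
  have := mul_eq_one_iff_eq_inv.mp h2
  calc x n * x k = x k * ((x k)⁻¹ * x n * x k * (x (n+1))⁻¹) * x (n+1) := by group
  _ = x k * x (n+1) := by rw [h2]; group

end SkipsAux

lemma skip_of_cond (is : List ℕ) (i : ℕ)
    (h : ∀ j : ℕ, ∀ hj : j < is.length, is.get ⟨j, hj⟩ < i + j) :
    x i * (is.map x).prod = (is.map x).prod * x (i + is.length) := by
  induction is generalizing i with
  | nil => simp
  | cons a rest ih =>
    have ha : a < i := by simpa using h 0 (by simp)
    have hrest : ∀ j : ℕ, ∀ hj : j < rest.length, rest.get ⟨j, hj⟩ < (i + 1) + j := by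
      intro j hj
      have := h (j + 1) (by simpa using Nat.succ_lt_succ hj)
      simp only [List.get_cons_succ] at this ⊢
      omega
    have key := ih (i + 1) hrest
    have hlen : i + (a :: rest).length = (i + 1) + rest.length := by
      simp [Nat.add_comm, Nat.add_assoc, Nat.add_left_comm]
    rw [hlen]
    simp only [List.map_cons, List.prod_cons, ← mul_assoc, x_rel ha]
    rw [mul_assoc, key, mul_assoc]

lemma cond_of_skip (is : List ℕ) (i : ℕ)
    (h : x i * (is.map x).prod = (is.map x).prod * x (i + is.length)) :
    ∀ j : ℕ, ∀ hj : j < is.length, is.get ⟨j, hj⟩ < i + j := by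
  induction is generalizing i with
  | nil => intro j hj; exact absurd hj (by simp)
  | cons a rest ih =>
    by_cases ha : a < i
    · -- use the relation to pass `x i` over `x a`
      have h' : x (i + 1) * (rest.map x).prod = (rest.map x).prod * x ((i + 1) + rest.length) := by
        have hlen : i + (a :: rest).length = (i + 1) + rest.length := by
          simp [Nat.add_comm, Nat.add_assoc, Nat.add_left_comm]
        rw [hlen] at h
        simp only [List.map_cons, List.prod_cons, ← mul_assoc, x_rel ha] at h
        rw [mul_assoc, mul_assoc] at h
        exact mul_left_cancel h
      have hrest := ih (i + 1) h'
      intro j hj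
      cases j with
      | zero => simpa using ha
      | succ j =>
        have hj' : j < rest.length := by simpa using Nat.lt_of_succ_lt_succ hj
        have := hrest j hj'
        simp only [List.get_cons_succ] at this ⊢
        omega
    · -- derive a contradiction via the representation
      exfalso
      push_neg at ha
      have hperm : ee i * (ee a * (rest.map ee).prod)
          = (ee a * (rest.map ee).prod) * ee (i + (a :: rest).length) := by
        have := congrArg pi h
        simpa [map_mul, pi_x, pi_prod, List.map_cons, List.prod_cons] using this
      set t : ℝ := (i : ℝ) + 1 + rest.length with ht
      have hpt := congr_arg (fun g : Equiv.Perm ℝ => g t) hperm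
      simp only [Equiv.Perm.mul_apply] at hpt
      have hfix : ee (i + (a :: rest).length) t = t := by
        rw [ee_apply]
        apply ff_eq
        simp only [List.length_cons]
        push_cast
        linarith
      rw [hfix] at hpt
      -- hpt : ee i (ee a (P t)) = ee a (P t)
      obtain ⟨hb1, hb2⟩ := prod_bounds rest t
      set P := (rest.map ee).prod
      set u := ee a (P t) with hu
      have hia : (i : ℝ) ≤ a := by exact_mod_cast ha
      have hui : (i : ℝ) < u := by
        by_cases hc : (i : ℝ) + 1 < P t
        · have := ff_ge a (P t)
          rw [hu, ee_apply]
          linarith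
        · push_neg at hc
          have hPt : P t = (i : ℝ) + 1 := by
            rw [ht] at hb1
            linarith
          have := ff_gt (k := a) (t := P t) (by rw [hPt]; linarith)
          rw [hu, ee_apply]
          linarith
      have := ff_lt (k := i) (t := u) hui
      rw [ee_apply] at hpt
      linarith [hpt.le, hpt.ge]

theorem skips_iff_and_mono (is : List ℕ) (i : ℕ) :
    (x i * (is.map x).prod = (is.map x).prod * x (i + is.length) ↔
      ∀ j : ℕ, ∀ hj : j < is.length, is.get ⟨j, hj⟩ < i + j) ∧
    (x i * (is.map x).prod = (is.map x).prod * x (i + is.length) →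
      ∀ k : ℕ, i < k → x k * (is.map x).prod = (is.map x).prod * x (k + is.length)) := by
  constructor
  · exact ⟨cond_of_skip is i, skip_of_cond is i⟩
  · intro h k hk
    apply skip_of_cond
    intro j hj
    have := cond_of_skip is i h j hj
    omega
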